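/- arXiv:2409.10292 — 6 statements merged into one kernel-verified Lean document; each statement's English description precedes it below -/
import Mathlib

section
/- Let n ≥ 2 and let 𝒜 = {A_1,…,A_K} be a finite collection of n×n matrices over 𝔽 (𝔽 = ℝ or ℂ) having no common nontrivial invariant subspace. Then for every fixed nonzero matrix Z of rank strictly less than n, the cost functional f_𝒜(Q) tends to infinity as Q tends to Z with Q ranging over invertible matrices; i.e., for every sequence (Q_j) of invertible matrices with Q_j → Z one has f_𝒜(Q_j) → ∞. -/
/-!
If `f_𝒜(Qⱼ)` stayed bounded along a subsequence of `Qⱼ → Z`, the off-diagonal parts of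
`Bⱼ = Qⱼ⁻¹ Aₖ Qⱼ` would be bounded, hence convergent along a further subsequence. Reading
`Aₖ Qⱼ = Qⱼ Bⱼ` column by column, `Aₖ qᵢ - Qⱼ (off-diagonal column of Bⱼ) = (Bⱼ)ᵢᵢ qᵢ`, and the
left side converges. A convergent sequence of multiples of vectors tending to `zᵢ = Z eᵢ` has its
limit in `𝔽 zᵢ` unless `zᵢ = 0`, so `Aₖ zᵢ ∈ range Z` for all `i` and `k`: the range of `Z` is a
common invariant subspace, nontrivial because `0 < rank Z < n`.
-/

open Filter Topology Matrix

/-- The joint-diagonalization cost functional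
`f_𝒜(Q) = (1/2) ∑ₖ ∑_{i≠j} |(Q⁻¹ Aₖ Q)_{ij}|²`. -/
noncomputable def costF {𝕜 : Type*} [RCLike 𝕜] {n K : ℕ}
    (A : Fin K → Matrix (Fin n) (Fin n) 𝕜) (Q : Matrix (Fin n) (Fin n) 𝕜) : ℝ :=
  (1 / 2) * ∑ k, ∑ i, ∑ j, if i ≠ j then ‖(Q⁻¹ * A k * Q) i j‖ ^ 2 else 0

theorem eq_zero_or_mem_span_singleton_of_tendsto_smul {𝕜 E ι : Type*} [RCLike 𝕜]
    [NormedAddCommGroup E] [NormedSpace 𝕜 E] {l : Filter ι} [l.NeBot] {d : ι → 𝕜} {v : ι → E}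
    {x y : E} (hv : Tendsto v l (𝓝 x)) (hdv : Tendsto (fun j => d j • v j) l (𝓝 y)) :
    x = 0 ∨ y ∈ 𝕜 ∙ x := by
  rcases eq_or_ne x 0 with hx | hx
  · exact .inl hx
  obtain ⟨g, -, hgx⟩ := exists_dual_vector 𝕜 x (norm_ne_zero_iff.mpr hx)
  have hgx0 : g x ≠ 0 := by rw [hgx]; exact_mod_cast norm_ne_zero_iff.mpr hx
  have hgv : Tendsto (fun j => g (v j)) l (𝓝 (g x)) := (g.continuous.tendsto x).comp hv
  -- a functional not vanishing at `x` recovers the scalars, which therefore converge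
  have hd : Tendsto d l (𝓝 (g y / g x)) := by
    refine (((g.continuous.tendsto y).comp hdv).div hgv hgx0).congr' ?_
    filter_upwards [hgv.eventually_ne hgx0] with j hj
    simp [mul_div_cancel_right₀ _ hj]
  rw [tendsto_nhds_unique hdv (hd.smul hv)]
  exact .inr (Submodule.smul_mem _ _ (Submodule.mem_span_singleton_self x))

namespace Matrix

theorem col_mul {R m n o : Type*} [Semiring R] [Fintype n] [Fintype o] [DecidableEq o]
    (M : Matrix m n R) (N : Matrix n o R) (i : o) : (M * N).col i = M *ᵥ N.col i := by
  rw [← mulVec_single_one, ← mulVec_single_one, mulVec_mulVec]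

section CommRing

variable {R n : Type*} [CommRing R] [Fintype n] [DecidableEq n]

theorem mulVec_col_eq_of_isUnit (A : Matrix n n R) {Q : Matrix n n R} (hQ : IsUnit Q) (i : n) :
    A *ᵥ Q.col i =
      Q *ᵥ Function.update ((Q⁻¹ * A * Q).col i) i 0 + (Q⁻¹ * A * Q) i i • Q.col i := by
  set B := Q⁻¹ * A * Q
  have hQB : Q * B = A * Q := by
    rw [← Matrix.mul_assoc, mul_nonsing_inv_cancel_left _ _ ((isUnit_iff_isUnit_det Q).mp hQ)]
  have hB : B.col i = Function.update (B.col i) i 0 + B i i • Pi.single i 1 := by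
    ext r
    rcases eq_or_ne r i with rfl | hr <;> simp [*]
  calc A *ᵥ Q.col i = Q *ᵥ B.col i := by rw [← col_mul, ← col_mul, hQB]
    _ = _ := by nth_rw 1 [hB]; rw [mulVec_add, mulVec_smul, mulVec_single_one]

theorem range_mulVecLin_ne_bot {Z : Matrix n n R} (hZ : Z ≠ 0) :
    LinearMap.range Z.mulVecLin ≠ ⊥ := by
  rwa [Ne, LinearMap.range_eq_bot, ← toLin'_apply', LinearEquiv.map_eq_zero_iff]

omit [DecidableEq n] in
theorem range_mulVecLin_ne_top [Nontrivial R] {Z : Matrix n n R} (hZ : Z.rank < Fintype.card n) :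
    LinearMap.range Z.mulVecLin ≠ ⊤ := by
  intro h
  rw [rank, h, finrank_top, Module.finrank_fintype_fun_eq_card] at hZ
  exact lt_irrefl _ hZ

end CommRing

variable {𝕜 n : Type*} [RCLike 𝕜] [Fintype n] [DecidableEq n]

theorem mulVec_col_mem_range_of_tendsto (A Z : Matrix n n 𝕜) {Q : ℕ → Matrix n n 𝕜}
    (hQ : ∀ j, IsUnit (Q j)) (hQZ : Tendsto Q atTop (𝓝 Z)) {C : ℝ}
    (hC : ∀ j r s, r ≠ s → ‖((Q j)⁻¹ * A * Q j) r s‖ ≤ C) (i : n) :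
    A *ᵥ Z.col i ∈ LinearMap.range Z.mulVecLin := by
  set c : ℕ → n → 𝕜 := fun j => Function.update (((Q j)⁻¹ * A * Q j).col i) i 0
  have hc : ∀ j, c j ∈ Metric.closedBall 0 (max C 0) := by
    refine fun j => mem_closedBall_zero_iff.2 <| (pi_norm_le_iff_of_nonneg (le_max_right _ _)).2
      fun r => ?_
    rcases eq_or_ne r i with rfl | hr
    · simp [c]
    · simpa only [c, Function.update_of_ne hr, col_apply] using (hC j r i hr).trans (le_max_left _ _)
  obtain ⟨o, -, φ, hφ, hco⟩ := tendsto_subseq_of_bounded Metric.isBounded_closedBall hc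
  have hQφ : Tendsto (Q ∘ φ) atTop (𝓝 Z) := hQZ.comp hφ.tendsto_atTop
  have hcol : Tendsto (fun j => (Q (φ j)).col i) atTop (𝓝 (Z.col i)) :=
    tendsto_pi_nhds.2 fun r => (hQφ.apply_nhds r).apply_nhds i
  have hmulVec : Continuous fun p : Matrix n n 𝕜 × (n → 𝕜) => p.1 *ᵥ p.2 :=
    continuous_fst.matrix_mulVec continuous_snd
  have hQc : Tendsto (fun j => Q (φ j) *ᵥ c (φ j)) atTop (𝓝 (Z *ᵥ o)) :=
    ((hmulVec.tendsto (Z, o)).comp (hQφ.prodMk_nhds hco) :)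
  have hAcol : Tendsto (fun j => A *ᵥ (Q (φ j)).col i) atTop (𝓝 (A *ᵥ Z.col i)) :=
    ((continuous_const.matrix_mulVec continuous_id).tendsto _).comp hcol
  have hdiag : Tendsto (fun j => ((Q (φ j))⁻¹ * A * Q (φ j)) i i • (Q (φ j)).col i) atTop
      (𝓝 (A *ᵥ Z.col i - Z *ᵥ o)) :=
    (hAcol.sub hQc).congr fun j => by rw [mulVec_col_eq_of_isUnit A (hQ (φ j)), add_sub_cancel_left]
  have hcol_mem : Z.col i ∈ LinearMap.range Z.mulVecLin := ⟨Pi.single i 1, mulVec_single_one Z i⟩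
  rcases eq_zero_or_mem_span_singleton_of_tendsto_smul hcol hdiag with h0 | hspan
  · simp [h0]
  · rw [← sub_add_cancel (A *ᵥ Z.col i) (Z *ᵥ o)]
    exact add_mem ((Submodule.span_singleton_le_iff_mem _ _).2 hcol_mem hspan) ⟨o, rfl⟩

theorem mulVec_mem_range_of_tendsto (A Z : Matrix n n 𝕜) {Q : ℕ → Matrix n n 𝕜}
    (hQ : ∀ j, IsUnit (Q j)) (hQZ : Tendsto Q atTop (𝓝 Z)) {C : ℝ}
    (hC : ∀ j r s, r ≠ s → ‖((Q j)⁻¹ * A * Q j) r s‖ ≤ C) {x : n → 𝕜}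
    (hx : x ∈ LinearMap.range Z.mulVecLin) :
    A *ᵥ x ∈ LinearMap.range Z.mulVecLin := by
  rw [range_mulVecLin] at hx ⊢
  refine Submodule.span_le (p := (Submodule.span 𝕜 (Set.range Z.col)).comap A.mulVecLin) |>.2 ?_ hx
  rintro _ ⟨i, rfl⟩
  simpa [range_mulVecLin] using mulVec_col_mem_range_of_tendsto A Z hQ hQZ hC i

end Matrix

theorem norm_sq_le_two_mul_costF {𝕜 : Type*} [RCLike 𝕜] {n K : ℕ}
    (A : Fin K → Matrix (Fin n) (Fin n) 𝕜) (Q : Matrix (Fin n) (Fin n) 𝕜)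
    (k : Fin K) {i l : Fin n} (h : i ≠ l) :
    ‖(Q⁻¹ * A k * Q) i l‖ ^ 2 ≤ 2 * costF A Q := by
  have hnonneg : ∀ k' i' j',
      (0 : ℝ) ≤ if i' ≠ j' then ‖(Q⁻¹ * A k' * Q) i' j'‖ ^ 2 else 0 :=
    fun _ _ _ => by split <;> positivity
  calc ‖(Q⁻¹ * A k * Q) i l‖ ^ 2 = if i ≠ l then ‖(Q⁻¹ * A k * Q) i l‖ ^ 2 else 0 := by simp [h]
    _ ≤ ∑ k', ∑ i', ∑ j', if i' ≠ j' then ‖(Q⁻¹ * A k' * Q) i' j'‖ ^ 2 else 0 := by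
      refine (Finset.single_le_sum (fun j' _ => hnonneg k i j') (Finset.mem_univ l)).trans ?_
      refine (Finset.single_le_sum (fun i' _ => Finset.sum_nonneg fun j' _ => hnonneg k i' j')
        (Finset.mem_univ i)).trans ?_
      exact Finset.single_le_sum (fun k' _ => Finset.sum_nonneg fun i' _ =>
        Finset.sum_nonneg fun j' _ => hnonneg k' i' j') (Finset.mem_univ k)
    _ = 2 * costF A Q := by rw [costF]; ring

theorem costF_tendsto_atTop_of_no_common_invariant_subspace_general
    {𝕜 : Type*} [RCLike 𝕜] {n K : ℕ}
    (A : Fin K → Matrix (Fin n) (Fin n) 𝕜)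
    (hA : ¬ ∃ Y : Submodule 𝕜 (Fin n → 𝕜), Y ≠ ⊥ ∧ Y ≠ ⊤ ∧
      ∀ k, ∀ x ∈ Y, (A k).mulVec x ∈ Y)
    (Z : Matrix (Fin n) (Fin n) 𝕜) (hZ0 : Z ≠ 0) (hZr : Z.rank < n)
    (Q : ℕ → Matrix (Fin n) (Fin n) 𝕜) (hQ : ∀ j, IsUnit (Q j))
    (hQZ : Tendsto Q atTop (𝓝 Z)) :
    Tendsto (fun j => costF A (Q j)) atTop atTop := by
  by_contra h_not_tendsto
  obtain ⟨b, hb⟩ : ∃ b, ∃ᶠ j in atTop, costF A (Q j) < b := by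
    simpa only [tendsto_atTop, not_forall, not_eventually, not_le] using h_not_tendsto
  obtain ⟨φ, hφ, hbφ⟩ := extraction_of_frequently_atTop hb
  have hC : ∀ k j i l, i ≠ l → ‖((Q (φ j))⁻¹ * A k * Q (φ j)) i l‖ ≤ √(2 * b) :=
    fun k j i l h => Real.le_sqrt_of_sq_le <|
      (norm_sq_le_two_mul_costF A _ k h).trans (by linarith [hbφ j])
  exact hA ⟨LinearMap.range Z.mulVecLin, range_mulVecLin_ne_bot hZ0,
    range_mulVecLin_ne_top (by simpa using hZr), fun k _ hx =>
      mulVec_mem_range_of_tendsto (A k) Z (fun j => hQ (φ j)) (hQZ.comp hφ.tendsto_atTop) (hC k) hx⟩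

/-- if the matrices `A₁,…,A_K` have no common nontrivial invariant
subspace, then `f_𝒜(Q) → ∞` as `Q → Z` along invertible matrices, for every fixed
nonzero rank-deficient `Z`. -/
theorem costF_tendsto_atTop_of_no_common_invariant_subspace
    {𝕜 : Type*} [RCLike 𝕜] {n K : ℕ} (hn : 2 ≤ n)
    (A : Fin K → Matrix (Fin n) (Fin n) 𝕜)
    (hA : ¬ ∃ Y : Submodule 𝕜 (Fin n → 𝕜), Y ≠ ⊥ ∧ Y ≠ ⊤ ∧
      ∀ k, ∀ x ∈ Y, (A k).mulVec x ∈ Y)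
    (Z : Matrix (Fin n) (Fin n) 𝕜) (hZ0 : Z ≠ 0) (hZr : Z.rank < n)
    (Q : ℕ → Matrix (Fin n) (Fin n) 𝕜) (hQ : ∀ j, IsUnit (Q j))
    (hQZ : Tendsto Q atTop (𝓝 Z)) :
    Tendsto (fun j => costF A (Q j)) atTop atTop :=
  costF_tendsto_atTop_of_no_common_invariant_subspace_general A hA Z hZ0 hZr Q hQ hQZ
end

section
/- Let n ≥ 2 and let 𝒜 = {A_1,…,A_K} be a finite collection of n×n matrices over 𝔽 (𝔽 = ℝ or ℂ) that possess a common nontrivial invariant subspace. Then there exists a nonzero rank-deficient matrix Z and a sequence (Q_j) of invertible matrices with Q_j → Z such that sup_j f_𝒜(Q_j) < ∞. -/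
/-!
Let `E` be an idempotent matrix with range the invariant subspace `Y` and `F = 1 - E`.
Invariance says `F Aₖ E = 0`, so conjugating by `Q_t = E + t F` (whose inverse is `E + t⁻¹ F`)
kills the only term that blows up as `t → 0`:
`Q_t⁻¹ Aₖ Q_t = E Aₖ E + F Aₖ F + t E Aₖ F`.
Hence the cost stays bounded along `t = 1/(j+1)`, while `Q_t → E`, which is nonzero and singular
because `Y` is a nontrivial subspace.
-/

open Filter Topology Matrix

section ScaleCompl

variable {𝕜 R : Type*}

/-- Acts as the identity on the range of the idempotent `e` and as `t` on its kernel. -/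
def scaleCompl [CommSemiring 𝕜] [Ring R] [Algebra 𝕜 R] (e : R) (t : 𝕜) : R :=
  e + t • (1 - e)

section CommSemiring

variable [CommSemiring 𝕜] [Ring R] [Algebra 𝕜 R] {e : R}

theorem scaleCompl_zero (e : R) : scaleCompl e (0 : 𝕜) = e := by
  simp [scaleCompl]

theorem IsIdempotentElem.scaleCompl_mul_scaleCompl (he : IsIdempotentElem e) (a b : 𝕜) :
    scaleCompl e a * scaleCompl e b = scaleCompl e (a * b) := by
  simp only [scaleCompl, mul_add, add_mul, smul_mul_assoc, mul_smul_comm, smul_smul, he.eq,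
    he.mul_one_sub_self, he.one_sub_mul_self, he.one_sub.eq, smul_zero, add_zero, zero_add,
    mul_comm b a]

theorem continuous_scaleCompl [TopologicalSpace 𝕜] [TopologicalSpace R] [ContinuousAdd R]
    [ContinuousSMul 𝕜 R] (e : R) : Continuous (scaleCompl e : 𝕜 → R) :=
  continuous_const.add (continuous_id.smul continuous_const)

end CommSemiring

variable [Field 𝕜] [Ring R] [Algebra 𝕜 R] {e : R}

theorem IsIdempotentElem.scaleCompl_inv_mul_scaleCompl (he : IsIdempotentElem e) {t : 𝕜}
    (ht : t ≠ 0) : scaleCompl e t⁻¹ * scaleCompl e t = 1 := by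
  rw [he.scaleCompl_mul_scaleCompl, inv_mul_cancel₀ ht]
  simp [scaleCompl]

theorem IsIdempotentElem.scaleCompl_mul_scaleCompl_inv (he : IsIdempotentElem e) {t : 𝕜}
    (ht : t ≠ 0) : scaleCompl e t * scaleCompl e t⁻¹ = 1 := by
  simpa using he.scaleCompl_inv_mul_scaleCompl (inv_ne_zero ht)

theorem IsIdempotentElem.isUnit_scaleCompl (he : IsIdempotentElem e) {t : 𝕜} (ht : t ≠ 0) :
    IsUnit (scaleCompl e t) :=
  ⟨⟨_, _, he.scaleCompl_mul_scaleCompl_inv ht, he.scaleCompl_inv_mul_scaleCompl ht⟩, rfl⟩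

theorem scaleCompl_inv_mul_mul_scaleCompl {x : R} (hx : (1 - e) * x * e = 0) {t : 𝕜}
    (ht : t ≠ 0) :
    scaleCompl e t⁻¹ * x * scaleCompl e t =
      e * x * e + (1 - e) * x * (1 - e) + t • (e * x * (1 - e)) := by
  unfold scaleCompl
  generalize 1 - e = f at hx ⊢
  simp only [mul_add, add_mul, smul_add, smul_mul_assoc, mul_smul_comm, smul_smul, hx,
    mul_inv_cancel₀ ht, one_smul, smul_zero, add_zero]
  abel

end ScaleCompl

namespace Matrix

variable {𝕜 ι : Type*} [Field 𝕜] [Fintype ι] [DecidableEq ι]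

theorem toLinAlgEquiv'_eq_mulVecLin (M : Matrix ι ι 𝕜) : toLinAlgEquiv' M = M.mulVecLin := rfl

theorem exists_isIdempotentElem_range_mulVecLin_eq (Y : Submodule 𝕜 (ι → 𝕜)) :
    ∃ E : Matrix ι ι 𝕜, IsIdempotentElem E ∧ LinearMap.range E.mulVecLin = Y := by
  obtain ⟨W, hW⟩ := Y.exists_isCompl
  refine ⟨LinearMap.toMatrixAlgEquiv' (Y.projection W hW),
    (Submodule.isIdempotentElem_projection hW).map _, ?_⟩
  rw [← toLinAlgEquiv'_eq_mulVecLin, toLinAlgEquiv'_toMatrixAlgEquiv',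
    Submodule.range_projection]

theorem one_sub_mul_mul_eq_zero_of_mem_invtSubmodule {E A : Matrix ι ι 𝕜}
    (hE : IsIdempotentElem E)
    (hA : LinearMap.range E.mulVecLin ∈ Module.End.invtSubmodule A.mulVecLin) :
    (1 - E) * A * E = 0 := by
  rw [← toLinAlgEquiv'_eq_mulVecLin, ← toLinAlgEquiv'_eq_mulVecLin] at hA
  have hconj := (LinearMap.IsIdempotentElem.range_mem_invtSubmodule_iff (hE.map _)).mp hA
  simp only [← Module.End.mul_eq_comp, ← map_mul] at hconj
  rw [sub_mul, sub_mul, one_mul, mul_assoc E, toLinAlgEquiv'.injective hconj, sub_self]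

theorem inv_scaleCompl {E : Matrix ι ι 𝕜} (hE : IsIdempotentElem E) {t : 𝕜} (ht : t ≠ 0) :
    (scaleCompl E t)⁻¹ = scaleCompl E t⁻¹ :=
  inv_eq_right_inv (hE.scaleCompl_mul_scaleCompl_inv ht)

theorem tendsto_inv_scaleCompl_mul_mul_scaleCompl [TopologicalSpace 𝕜] [IsTopologicalRing 𝕜]
    {α : Type*} {l : Filter α} {E X : Matrix ι ι 𝕜} (hE : IsIdempotentElem E)
    (hX : (1 - E) * X * E = 0) {t : α → 𝕜} (ht : ∀ j, t j ≠ 0) (ht0 : Tendsto t l (𝓝 0)) :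
    Tendsto (fun j ↦ (scaleCompl E (t j))⁻¹ * X * scaleCompl E (t j)) l
      (𝓝 (E * X * E + (1 - E) * X * (1 - E))) := by
  have hconj : ∀ j, (scaleCompl E (t j))⁻¹ * X * scaleCompl E (t j) =
      E * X * E + (1 - E) * X * (1 - E) + t j • (E * X * (1 - E)) := fun j ↦ by
    rw [inv_scaleCompl hE (ht j), scaleCompl_inv_mul_mul_scaleCompl hX (ht j)]
  simp_rw [hconj]
  simpa using tendsto_const_nhds.add (ht0.smul_const (E * X * (1 - E)))

end Matrix

section Cost

variable {𝕜 : Type*} [RCLike 𝕜] {n K : ℕ}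

noncomputable def offDiagCost (M : Fin K → Matrix (Fin n) (Fin n) 𝕜) : ℝ :=
  (1 / 2) * ∑ k, ∑ i, ∑ j, if i ≠ j then ‖M k i j‖ ^ 2 else 0

theorem costF_eq_offDiagCost (A : Fin K → Matrix (Fin n) (Fin n) 𝕜)
    (Q : Matrix (Fin n) (Fin n) 𝕜) : costF A Q = offDiagCost fun k ↦ Q⁻¹ * A k * Q := rfl

theorem continuous_offDiagCost :
    Continuous (offDiagCost : (Fin K → Matrix (Fin n) (Fin n) 𝕜) → ℝ) := by
  refine continuous_const.mul <| continuous_finsetSum _ fun k _ ↦ continuous_finsetSum _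
    fun i _ ↦ continuous_finsetSum _ fun j _ ↦ ?_
  by_cases hij : i = j
  · simp only [hij, ne_eq, not_true_eq_false, if_false, continuous_const]
  · simp only [hij, ne_eq, not_false_eq_true, if_true]
    fun_prop

theorem bddAbove_range_costF_of_tendsto {A B : Fin K → Matrix (Fin n) (Fin n) 𝕜}
    {Q : ℕ → Matrix (Fin n) (Fin n) 𝕜}
    (hQ : ∀ k, Tendsto (fun j ↦ (Q j)⁻¹ * A k * Q j) atTop (𝓝 (B k))) :
    BddAbove (Set.range fun j ↦ costF A (Q j)) := by
  simp_rw [costF_eq_offDiagCost]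
  exact ((continuous_offDiagCost.tendsto B).comp (tendsto_pi_nhds.mpr hQ)).bddAbove_range

end Cost

theorem exists_bounded_costF_of_common_invariant_subspace_general
    {𝕜 : Type*} [RCLike 𝕜] {n K : ℕ}
    (A : Fin K → Matrix (Fin n) (Fin n) 𝕜)
    (hA : ∃ Y : Submodule 𝕜 (Fin n → 𝕜), Y ≠ ⊥ ∧ Y ≠ ⊤ ∧
      ∀ k, ∀ x ∈ Y, (A k).mulVec x ∈ Y) :
    ∃ (Z : Matrix (Fin n) (Fin n) 𝕜) (Q : ℕ → Matrix (Fin n) (Fin n) 𝕜),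
      Z ≠ 0 ∧ Z.rank < n ∧ (∀ j, IsUnit (Q j)) ∧ Tendsto Q atTop (𝓝 Z) ∧
      ∃ C : ℝ, ∀ j, costF A (Q j) ≤ C := by
  obtain ⟨Y, hY_ne_bot, hY_ne_top, hY_inv⟩ := hA
  obtain ⟨E, hE, hE_range⟩ := exists_isIdempotentElem_range_mulVecLin_eq Y
  have hFAE (k : Fin K) : (1 - E) * A k * E = 0 :=
    one_sub_mul_mul_eq_zero_of_mem_invtSubmodule hE <| by rw [hE_range]; exact hY_inv k
  set t : ℕ → 𝕜 := fun j ↦ 1 / ((j : 𝕜) + 1)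
  have ht (j : ℕ) : t j ≠ 0 := one_div_ne_zero (Nat.cast_add_one_ne_zero j)
  have ht0 : Tendsto t atTop (𝓝 0) := tendsto_one_div_add_atTop_nhds_zero_nat
  refine ⟨E, fun j ↦ scaleCompl E (t j), ?_, ?_, fun j ↦ hE.isUnit_scaleCompl (ht j), ?_, ?_⟩
  · rintro rfl
    exact hY_ne_bot (by simpa using hE_range.symm)
  · have := Submodule.finrank_lt hY_ne_top
    rwa [Module.finrank_fin_fun, ← hE_range] at this
  · simpa only [scaleCompl_zero, Function.comp_def] using
      ((continuous_scaleCompl E).tendsto (0 : 𝕜)).comp ht0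
  · obtain ⟨C, hC⟩ := bddAbove_range_costF_of_tendsto fun k ↦
      tendsto_inv_scaleCompl_mul_mul_scaleCompl hE (hFAE k) ht ht0
    exact ⟨C, fun j ↦ hC ⟨j, rfl⟩⟩

/-- if the matrices `A₁,…,A_K` possess a common nontrivial invariant
subspace, then there is a nonzero rank-deficient matrix `Z` and a sequence of
invertible matrices `Q_j → Z` along which `f_𝒜` stays bounded. -/
theorem exists_bounded_costF_of_common_invariant_subspace
    {𝕜 : Type*} [RCLike 𝕜] {n K : ℕ} (hn : 2 ≤ n)
    (A : Fin K → Matrix (Fin n) (Fin n) 𝕜)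
    (hA : ∃ Y : Submodule 𝕜 (Fin n → 𝕜), Y ≠ ⊥ ∧ Y ≠ ⊤ ∧
      ∀ k, ∀ x ∈ Y, (A k).mulVec x ∈ Y) :
    ∃ (Z : Matrix (Fin n) (Fin n) 𝕜) (Q : ℕ → Matrix (Fin n) (Fin n) 𝕜),
      Z ≠ 0 ∧ Z.rank < n ∧ (∀ j, IsUnit (Q j)) ∧ Tendsto Q atTop (𝓝 Z) ∧
      ∃ C : ℝ, ∀ j, costF A (Q j) ≤ C :=
  exists_bounded_costF_of_common_invariant_subspace_general A hA
end

section
/- For every n×n complex matrix A one has ‖J ∘ A‖ ≤ ‖A‖ ≤ √n · (max_{λ ∈ σ(A)} |λ| + 2n‖J ∘ A‖), where σ(A) denotes the set of eigenvalues of A. -/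
/-!
Every diagonal entry `A i i` lies within `2 ∑ₖ Rₖ` of an eigenvalue, `Rₖ` being the Gershgorin
radii. To see this, deform the diagonal part of `A` into `A` by scaling the off-diagonal part by
`s ∈ [0, 1]`. Along the way every eigenvalue stays in a Gershgorin disc, so none can cross the
boundary of the union `U` of the (slightly enlarged) discs chained to the `i`-th one; as eigenvalues
move continuously and `A i i` is one at `s = 0`, `A` has an eigenvalue in `U`, a set of diameter
at most `2 ∑ₖ Rₖ`. Cauchy–Schwarz over the `n² - n` off-diagonal entries gives
`2 ∑ₖ Rₖ ≤ (2n - 1) ‖J ∘ A‖`, hence `|A i i| ≤ ρ(A) + (2n - 1) ‖J ∘ A‖`, and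
`‖A‖² = ∑ᵢ |A i i|² + ‖J ∘ A‖²` finishes the proof.
-/

open Matrix

/-- The Frobenius norm of a complex matrix. -/
noncomputable def frob {n : ℕ} (A : Matrix (Fin n) (Fin n) ℂ) : ℝ :=
  Real.sqrt (∑ i, ∑ j, ‖A i j‖ ^ 2)

/-- The off-diagonal part `J ∘ A` of a matrix (Hadamard product with the matrix `J`
having zeros on the diagonal and ones elsewhere). -/
def offDiag' {n : ℕ} (A : Matrix (Fin n) (Fin n) ℂ) : Matrix (Fin n) (Fin n) ℂ :=
  fun i j => if i = j then 0 else A i j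

open Metric Finset Polynomial Topology Filter

theorem Finset.sum_univ_offDiag {ι M : Type*} [Fintype ι] [DecidableEq ι] [AddCommMonoid M]
    (f : ι → ι → M) : ∑ p ∈ univ.offDiag, f p.1 p.2 = ∑ i, ∑ j ∈ univ.erase i, f i j :=
  sum_finset_product _ _ _ fun p => by simp [and_comm, eq_comm]

section BallGraph

variable {α ι : Type*} [PseudoMetricSpace α]

def ballGraph (c : ι → α) (r : ι → ℝ) : SimpleGraph ι where
  Adj j k := j ≠ k ∧ dist (c j) (c k) < r j + r k
  symm := ⟨fun _ _ h => ⟨h.1.symm, by rw [dist_comm, add_comm]; exact h.2⟩⟩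
  loopless := ⟨fun _ h => h.1 rfl⟩

def ballComponent (c : ι → α) (r : ι → ℝ) (i : ι) : Set α :=
  ⋃ (j) (_ : (ballGraph c r).Reachable i j), ball (c j) (r j)

variable {c : ι → α} {r : ι → ℝ}

theorem isOpen_ballComponent (i : ι) : IsOpen (ballComponent c r i) :=
  isOpen_biUnion fun _ _ => isOpen_ball

theorem notMem_frontier_ballComponent {i k : ι} {z : α} (hz : z ∈ ball (c k) (r k)) :
    z ∉ frontier (ballComponent c r i) := by
  by_cases hik : (ballGraph c r).Reachable i k
  · rw [(isOpen_ballComponent i).frontier_eq]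
    exact fun h => h.2 (Set.mem_biUnion hik hz)
  · refine Set.notMem_subset frontier_subset_closure
      (Set.disjoint_left.mp (Disjoint.closure_right ?_ isOpen_ball) hz)
    simp only [ballComponent, Set.disjoint_iUnion_right]
    intro j hij
    refine Set.disjoint_left.mpr fun u huk huj => hik (hij.trans ?_)
    obtain rfl | hjk := eq_or_ne j k
    · rfl
    refine SimpleGraph.Adj.reachable (G := ballGraph c r) ⟨hjk, ?_⟩
    calc dist (c j) (c k) ≤ dist u (c j) + dist u (c k) := dist_triangle_left _ _ _
      _ < r j + r k := add_lt_add (mem_ball.mp huj) (mem_ball.mp huk)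

theorem dist_add_add_le_of_ballGraph_walk {a b : ι} (p : (ballGraph c r).Walk a b) :
    dist (c a) (c b) + r a + r b ≤ 2 * (p.support.map r).sum := by
  induction p with
  | nil => simp [two_mul]
  | @cons a b d h p ih =>
    simp only [SimpleGraph.Walk.support_cons, List.map_cons, List.sum_cons]
    linarith [h.2, dist_triangle (c a) (c b) (c d)]

theorem dist_lt_of_mem_ballComponent [Fintype ι] (hr : ∀ j, 0 ≤ r j) {i : ι} {z : α}
    (hz : z ∈ ballComponent c r i) : dist (c i) z < 2 * ∑ j, r j := by
  classical
  simp only [ballComponent, Set.mem_iUnion] at hz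
  obtain ⟨j, hij, hzj⟩ := hz
  obtain ⟨p, hp⟩ := hij.exists_isPath
  have hsum : (p.support.map r).sum ≤ ∑ j, r j := by
    rw [← List.sum_toFinset _ hp.support_nodup]
    exact sum_le_sum_of_subset_of_nonneg (subset_univ _) fun j _ _ => hr j
  have hwalk := dist_add_add_le_of_ballGraph_walk p
  have htri := dist_triangle (c i) (c j) z
  rw [mem_ball, dist_comm] at hzj
  linarith [hr i]

end BallGraph

namespace Matrix

variable {ι : Type*} [Fintype ι] [DecidableEq ι]

theorem exists_mem_spectrum_dist_lt_of_norm_eval_charpoly_lt {B : Matrix ι ι ℂ} {z : ℂ} {ε : ℝ}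
    (hε : 0 ≤ ε) (h : ‖B.charpoly.eval z‖ < ε ^ Fintype.card ι) :
    ∃ μ ∈ spectrum ℂ B, dist z μ < ε := by
  by_contra! hfar
  have hroots : ∀ μ ∈ B.charpoly.roots, ε ≤ ‖z - μ‖ := fun μ hμ => by
    rw [← dist_eq_norm]
    exact hfar μ (mem_spectrum_iff_isRoot_charpoly.mpr (isRoot_of_mem_roots hμ))
  have hsplit := IsAlgClosed.splits B.charpoly
  have hlower : ε ^ Fintype.card ι ≤ ‖B.charpoly.eval z‖ := by
    rw [hsplit.eval_eq_prod_roots_of_monic B.charpoly_monic, ← normHom_apply,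
      map_multiset_prod, Multiset.map_map]
    calc ε ^ Fintype.card ι = (B.charpoly.roots.map fun _ => ε).prod := by
          rw [Multiset.map_const', Multiset.prod_replicate, ← hsplit.natDegree_eq_card_roots,
            charpoly_natDegree_eq_dim]
      _ ≤ _ := Multiset.prod_map_le_prod_map₀ _ _ (fun _ _ => hε) hroots
  linarith

theorem continuous_eval_charpoly {X : Type*} [TopologicalSpace X] {B : X → Matrix ι ι ℂ}
    (hB : Continuous B) : Continuous fun p : X × ℂ => (B p.1).charpoly.eval p.2 := by
  simp_rw [eval_charpoly, scalar_apply]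
  fun_prop

theorem spectrum_inter_nonempty_of_disjoint_frontier {X : Type*} [TopologicalSpace X]
    [PreconnectedSpace X] [SequentialSpace X] {B : X → Matrix ι ι ℂ} (hB : Continuous B)
    {U : Set ℂ} (hU : Bornology.IsBounded U)
    (hfrontier : ∀ x, Disjoint (spectrum ℂ (B x)) (frontier U)) {x₀ : X}
    (h₀ : (spectrum ℂ (B x₀) ∩ U).Nonempty) (x : X) : (spectrum ℂ (B x) ∩ U).Nonempty := by
  have hcont := continuous_eval_charpoly hB
  have hmem : ∀ x z, z ∈ spectrum ℂ (B x) ↔ (B x).charpoly.eval z = 0 := fun x z =>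
    mem_spectrum_iff_isRoot_charpoly
  have hinterior : ∀ x, ∀ z ∈ spectrum ℂ (B x), z ∈ closure U → z ∈ interior U :=
    fun x z hz hzU => by_contra fun h => (hfrontier x).notMem_of_mem_left hz ⟨hzU, h⟩
  suffices IsClopen {x | (spectrum ℂ (B x) ∩ U).Nonempty} by
    exact Set.eq_univ_iff_forall.mp (this.eq_univ ⟨x₀, h₀⟩) x
  constructor
  · refine IsSeqClosed.isClosed fun {xs p} hxs hxp => ?_
    choose zs hzs using hxs
    obtain ⟨z, hzU, φ, hφ, hzφ⟩ := hU.isCompact_closure.tendsto_subseq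
      fun k => subset_closure (hzs k).2
    have hz : z ∈ spectrum ℂ (B p) := by
      rw [hmem]
      refine (isClosed_eq hcont continuous_const).mem_of_tendsto
        ((hxp.comp hφ.tendsto_atTop).prodMk_nhds hzφ) (Eventually.of_forall fun k => ?_)
      exact (hmem _ _).mp (hzs (φ k)).1
    exact ⟨z, hz, interior_subset (hinterior p z hz hzU)⟩
  · refine isOpen_iff_mem_nhds.mpr fun y ⟨z, hz, hzU⟩ => ?_
    obtain ⟨δ, hδ, hball⟩ := Metric.mem_nhds_iff.mp
      (mem_interior_iff_mem_nhds.mp (hinterior y z hz (subset_closure hzU)))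
    have hsmall : ∀ᶠ y' in 𝓝 y, ‖(B y').charpoly.eval z‖ < δ ^ Fintype.card ι := by
      refine (hcont.comp (continuous_id.prodMk continuous_const)).norm.continuousAt.eventually_lt
        continuousAt_const ?_
      simp only [Function.comp_apply, id, (hmem y z).mp hz, norm_zero]
      positivity
    filter_upwards [hsmall] with y' hy'
    obtain ⟨μ, hμ, hμz⟩ := exists_mem_spectrum_dist_lt_of_norm_eval_charpoly_lt hδ.le hy'
    exact ⟨μ, hμ, hball (mem_ball'.mpr hμz)⟩

def gershgorinRadius {K : Type*} [SeminormedAddGroup K] (A : Matrix ι ι K) (k : ι) : ℝ :=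
  ∑ j ∈ univ.erase k, ‖A k j‖

theorem gershgorinRadius_nonneg {K : Type*} [SeminormedAddGroup K] (A : Matrix ι ι K) (k : ι) :
    0 ≤ A.gershgorinRadius k :=
  sum_nonneg fun _ _ => norm_nonneg _

theorem exists_dist_le_gershgorinRadius_of_mem_spectrum {K : Type*} [NormedField K]
    {A : Matrix ι ι K} {z : K} (hz : z ∈ spectrum K A) :
    ∃ k, dist z (A k k) ≤ A.gershgorinRadius k :=
  eigenvalue_mem_ball (Module.End.hasEigenvalue_iff_mem_spectrum.mpr (by rwa [spectrum_toLin']))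

theorem exists_mem_spectrum_dist_diag_lt (A : Matrix ι ι ℂ) (i : ι) {r : ι → ℝ}
    (hr : ∀ k, A.gershgorinRadius k < r k) :
    ∃ z ∈ spectrum ℂ A, dist (A i i) z < 2 * ∑ k, r k := by
  set B : unitInterval → Matrix ι ι ℂ :=
    fun s => of fun k j => if k = j then A k j else (s : ℂ) * A k j with hB
  set U := ballComponent (fun k => A k k) r i
  have hr0 : ∀ k, 0 ≤ r k := fun k => (A.gershgorinRadius_nonneg k).trans (hr k).le
  have hB_cont : Continuous B := by
    refine continuous_matrix fun k j => ?_
    simp only [hB, of_apply]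
    split_ifs <;> fun_prop
  have hU : Bornology.IsBounded U :=
    isBounded_ball.subset fun z hz => mem_ball'.mpr (dist_lt_of_mem_ballComponent hr0 hz)
  have hfrontier : ∀ s, Disjoint (spectrum ℂ (B s)) (frontier U) := by
    refine fun s => Set.disjoint_left.mpr fun z hz => ?_
    obtain ⟨k, hk⟩ := exists_dist_le_gershgorinRadius_of_mem_spectrum hz
    have hradius : (B s).gershgorinRadius k ≤ A.gershgorinRadius k := by
      refine sum_le_sum fun j hj => ?_
      simp only [hB, of_apply, if_neg (ne_of_mem_erase hj).symm, norm_mul, Complex.norm_real,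
        Real.norm_eq_abs, abs_of_nonneg s.2.1]
      exact mul_le_of_le_one_left (norm_nonneg _) s.2.2
    refine notMem_frontier_ballComponent (k := k) (mem_ball.mpr ?_)
    simpa [hB] using hk.trans_lt (hradius.trans_lt (hr k))
  have h₀ : (spectrum ℂ (B 0) ∩ U).Nonempty := by
    have hB0 : B 0 = diagonal fun k => A k k := by
      ext k j
      by_cases hkj : k = j <;> simp [hB, hkj]
    refine ⟨A i i, by simp [hB0], Set.mem_biUnion (SimpleGraph.Reachable.refl i) ?_⟩
    exact mem_ball_self ((A.gershgorinRadius_nonneg i).trans_lt (hr i))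
  have hB1 : B 1 = A := by
    ext k j
    by_cases hkj : k = j <;> simp [hB, hkj]
  obtain ⟨z, hz, hzU⟩ :=
    hB1 ▸ spectrum_inter_nonempty_of_disjoint_frontier hB_cont hU hfrontier h₀ 1
  exact ⟨z, hz, dist_lt_of_mem_ballComponent (c := fun k => A k k) hr0 hzU⟩

theorem exists_mem_spectrum_dist_diag_le (A : Matrix ι ι ℂ) (i : ι) :
    ∃ z ∈ spectrum ℂ A, dist (A i i) z ≤ 2 * ∑ k, A.gershgorinRadius k := by
  have hlt : ∀ ε > 0,
      ∃ z ∈ spectrum ℂ A, dist (A i i) z < 2 * ∑ k, (A.gershgorinRadius k + ε) :=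
    fun ε hε => A.exists_mem_spectrum_dist_diag_lt i fun k => lt_add_of_pos_right _ hε
  obtain ⟨z, hz, hdist⟩ := A.finite_spectrum.isCompact.exists_infDist_eq_dist
    ((hlt 1 one_pos).imp fun _ h => h.1) (A i i)
  have hlim : Tendsto (fun ε => 2 * ∑ k, (A.gershgorinRadius k + ε)) (𝓝[>] 0)
      (𝓝 (2 * ∑ k, A.gershgorinRadius k)) :=
    ((by fun_prop : Continuous fun ε => 2 * ∑ k, (A.gershgorinRadius k + ε)).tendsto' 0 _
      (by simp)).mono_left nhdsWithin_le_nhds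
  refine ⟨z, hz, hdist ▸ ge_of_tendsto hlim (eventually_nhdsWithin_of_forall fun ε hε => ?_)⟩
  obtain ⟨z', hz', hz'dist⟩ := hlt ε hε
  exact (infDist_le_dist_of_mem hz').trans hz'dist.le

end Matrix

section Frobenius

variable {n : ℕ}

theorem frob_nonneg (A : Matrix (Fin n) (Fin n) ℂ) : 0 ≤ frob A :=
  Real.sqrt_nonneg _

theorem frob_sq (A : Matrix (Fin n) (Fin n) ℂ) : frob A ^ 2 = ∑ i, ∑ j, ‖A i j‖ ^ 2 :=
  Real.sq_sqrt (by positivity)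

theorem frob_offDiag'_sq (A : Matrix (Fin n) (Fin n) ℂ) :
    frob (offDiag' A) ^ 2 = ∑ i, ∑ j ∈ univ.erase i, ‖A i j‖ ^ 2 := by
  rw [frob_sq]
  refine sum_congr rfl fun i _ => ?_
  rw [← sum_erase (f := fun j => ‖offDiag' A i j‖ ^ 2) (a := i) univ (by simp [offDiag'])]
  exact sum_congr rfl fun j hj => by simp [offDiag', (ne_of_mem_erase hj).symm]

theorem frob_sq_eq_sum_diag_add (A : Matrix (Fin n) (Fin n) ℂ) :
    frob A ^ 2 = ∑ i, ‖A i i‖ ^ 2 + frob (offDiag' A) ^ 2 := by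
  rw [frob_offDiag'_sq, frob_sq, ← sum_add_distrib]
  exact sum_congr rfl fun i _ => (add_sum_erase _ _ (mem_univ i)).symm

theorem frob_offDiag'_le (A : Matrix (Fin n) (Fin n) ℂ) : frob (offDiag' A) ≤ frob A := by
  refine (pow_le_pow_iff_left₀ (frob_nonneg _) (frob_nonneg _) two_ne_zero).mp ?_
  rw [frob_sq_eq_sum_diag_add A]
  exact le_add_of_nonneg_left (by positivity)

theorem two_mul_sum_gershgorinRadius_le (hn : 1 ≤ n) (A : Matrix (Fin n) (Fin n) ℂ) :
    2 * ∑ k, A.gershgorinRadius k ≤ (2 * n - 1) * frob (offDiag' A) := by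
  have hcs : (∑ k, A.gershgorinRadius k) ^ 2 ≤ (n ^ 2 - n) * frob (offDiag' A) ^ 2 := by
    have := sq_sum_le_card_mul_sum_sq (s := univ.offDiag) (f := fun p => ‖A p.1 p.2‖)
    rw [sum_univ_offDiag (fun i j => ‖A i j‖), sum_univ_offDiag (fun i j => ‖A i j‖ ^ 2),
      offDiag_card, card_univ, Fintype.card_fin, Nat.cast_sub (Nat.le_mul_self n)] at this
    rw [frob_offDiag'_sq]
    simpa [sq, Matrix.gershgorinRadius] using this
  have hn' : (1 : ℝ) ≤ n := by exact_mod_cast hn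
  refine (pow_le_pow_iff_left₀ (mul_nonneg zero_le_two (sum_nonneg fun k _ =>
    A.gershgorinRadius_nonneg k)) (mul_nonneg (by linarith) (frob_nonneg _)) two_ne_zero).mp ?_
  nlinarith [sq_nonneg (frob (offDiag' A))]

end Frobenius

/-- `‖J ∘ A‖ ≤ ‖A‖ ≤ √n (max_{λ∈σ(A)} |λ| + 2n ‖J ∘ A‖)`. -/
theorem frob_le_and_le_sqrt_mul {n : ℕ} (hn : 1 ≤ n) (A : Matrix (Fin n) (Fin n) ℂ) :
    frob (offDiag' A) ≤ frob A ∧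
      frob A ≤ Real.sqrt n *
        (sSup ((fun μ : ℂ => ‖μ‖) '' spectrum ℂ A) + 2 * n * frob (offDiag' A)) := by
  set ρ := sSup ((fun μ : ℂ => ‖μ‖) '' spectrum ℂ A)
  set F := frob (offDiag' A)
  refine ⟨frob_offDiag'_le A, ?_⟩
  have hdiag : ∀ i, ‖A i i‖ ≤ ρ + (2 * n - 1) * F := fun i => by
    obtain ⟨z, hz, hdist⟩ := A.exists_mem_spectrum_dist_diag_le i
    have hzρ : ‖z‖ ≤ ρ :=
      le_csSup (A.finite_spectrum.image _).bddAbove (Set.mem_image_of_mem _ hz)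
    rw [dist_eq_norm] at hdist
    linarith [norm_le_insert' (A i i) z, two_mul_sum_gershgorinRadius_le hn A]
  have hn' : (1 : ℝ) ≤ n := by exact_mod_cast hn
  have hF := frob_nonneg (offDiag' A)
  have hρ : 0 ≤ ρ + (2 * n - 1) * F := (norm_nonneg _).trans (hdiag ⟨0, hn⟩)
  have hsq : frob A ^ 2 ≤ (Real.sqrt n * (ρ + 2 * n * F)) ^ 2 := by
    rw [frob_sq_eq_sum_diag_add, mul_pow, Real.sq_sqrt (Nat.cast_nonneg n)]
    calc ∑ i, ‖A i i‖ ^ 2 + F ^ 2 ≤ n * (ρ + (2 * n - 1) * F) ^ 2 + F ^ 2 := by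
          grw [sum_le_sum fun i _ => pow_le_pow_left₀ (norm_nonneg _) (hdiag i) 2]
          simp
      _ ≤ n * (ρ + 2 * n * F) ^ 2 := by
          nlinarith [mul_nonneg hρ hF, mul_nonneg (sub_nonneg.2 hn') (sq_nonneg F)]
  exact (pow_le_pow_iff_left₀ (frob_nonneg A)
    (mul_nonneg (Real.sqrt_nonneg _) (by nlinarith)) two_ne_zero).mp hsq
end

section
/- Let A and Z be n×n complex matrices with Z nonzero and rank-deficient, and suppose A(Im(Z)) ⊄ Im(Z), where Im(Z) is the column space (range) of Z. Then for every sequence (Q_j) of invertible n×n complex matrices converging to Z, the Frobenius norms ‖Q_j^{-1} A Q_j‖ tend to infinity. -/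
/-!
If `‖Q_j⁻¹ A Q_j‖` does not tend to infinity, it stays bounded along a subsequence, so by
compactness `Q_j⁻¹ A Q_j → B` along a further subsequence. Passing to the limit in
`Q_j (Q_j⁻¹ A Q_j) = A Q_j` gives `Z B = A Z`, and then `A (Im Z) = Im (A Z) = Im (Z B) ⊆ Im Z`.
-/

open Filter Topology Matrix

section Frobenius

attribute [local instance] Matrix.frobeniusNormedAddCommGroup Matrix.frobeniusNormedSpace

variable {n : ℕ}

theorem frob_eq_norm (A : Matrix (Fin n) (Fin n) ℂ) : frob A = ‖A‖ := by
  rw [frob, frobenius_norm_def, Real.sqrt_eq_rpow]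
  simp only [Real.rpow_two]

theorem isCompact_setOf_frob_le (M : ℝ) :
    IsCompact {X : Matrix (Fin n) (Fin n) ℂ | frob X ≤ M} := by
  simp_rw [frob_eq_norm, ← mem_closedBall_zero_iff, Set.ofPred_mem_eq]
  exact isCompact_closedBall _ _

end Frobenius

theorem exists_tendsto_subseq_of_not_tendsto_frob {n : ℕ} {B : ℕ → Matrix (Fin n) (Fin n) ℂ}
    (h : ¬ Tendsto (fun j => frob (B j)) atTop atTop) :
    ∃ B₀, ∃ φ : ℕ → ℕ, StrictMono φ ∧ Tendsto (B ∘ φ) atTop (𝓝 B₀) := by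
  obtain ⟨M, hM⟩ := not_forall.mp (mt tendsto_atTop.mpr h)
  have hle : ∃ᶠ j in atTop, B j ∈ {X | frob X ≤ M} :=
    (not_eventually.mp hM).mono fun _ hj => (not_le.mp hj).le
  -- not inferred through the type synonym `Matrix`
  have : FirstCountableTopology (Matrix (Fin n) (Fin n) ℂ) :=
    inferInstanceAs (FirstCountableTopology (Fin n → Fin n → ℂ))
  obtain ⟨B₀, -, φ, hφ, hB⟩ := (isCompact_setOf_frob_le M).tendsto_subseq' hle
  exact ⟨B₀, φ, hφ, hB⟩

theorem mul_eq_mul_of_tendsto {ι M : Type*} [Monoid M] [TopologicalSpace M] [ContinuousMul M]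
    [T2Space M] {l : Filter ι} [l.NeBot] {A Z B₀ : M} {Q B : ι → M}
    (hQ : Tendsto Q l (𝓝 Z)) (hB : Tendsto B l (𝓝 B₀)) (h : ∀ i, Q i * B i = A * Q i) :
    Z * B₀ = A * Z :=
  tendsto_nhds_unique (by simpa only [h] using hQ.mul hB) (tendsto_const_nhds.mul hQ)

theorem Matrix.mulVec_mem_range_of_mul_eq {R m k : Type*} [CommSemiring R] [Fintype m]
    [Fintype k] {A : Matrix m m R} {Z : Matrix m k R} {B : Matrix k k R} (h : Z * B = A * Z)
    {x : m → R} (hx : x ∈ LinearMap.range Z.mulVecLin) :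
    A *ᵥ x ∈ LinearMap.range Z.mulVecLin := by
  obtain ⟨v, rfl⟩ := hx
  exact ⟨B *ᵥ v, by simp only [mulVecLin_apply, mulVec_mulVec, h]⟩

theorem frob_conj_tendsto_atTop_general {n : ℕ} (A Z : Matrix (Fin n) (Fin n) ℂ)
    (hAZ : ¬ ∀ x ∈ LinearMap.range Z.mulVecLin, A.mulVec x ∈ LinearMap.range Z.mulVecLin)
    (Q : ℕ → Matrix (Fin n) (Fin n) ℂ) (hQ : ∀ j, IsUnit (Q j))
    (hQZ : Tendsto Q atTop (𝓝 Z)) :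
    Tendsto (fun j => frob ((Q j)⁻¹ * A * Q j)) atTop atTop := by
  by_contra hbdd
  obtain ⟨B, φ, hφ, hB⟩ := exists_tendsto_subseq_of_not_tendsto_frob hbdd
  have hconj : ∀ j, Q j * ((Q j)⁻¹ * A * Q j) = A * Q j := fun j => by
    rw [mul_assoc, mul_nonsing_inv_cancel_left _ _ ((isUnit_iff_isUnit_det _).mp (hQ j))]
  have hZB : Z * B = A * Z :=
    mul_eq_mul_of_tendsto (hQZ.comp hφ.tendsto_atTop) hB fun k => hconj (φ k)
  exact hAZ fun x hx => mulVec_mem_range_of_mul_eq hZB hx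

/-- if `Z ≠ 0` is rank-deficient and the range of `Z` is not an
invariant subspace of `A`, then `‖Q_j⁻¹ A Q_j‖ → ∞` for every sequence of
invertible matrices `Q_j → Z`. -/
theorem frob_conj_tendsto_atTop {n : ℕ} (A Z : Matrix (Fin n) (Fin n) ℂ)
    (hZ0 : Z ≠ 0) (hZr : Z.rank < n)
    (hAZ : ¬ ∀ x ∈ LinearMap.range Z.mulVecLin, A.mulVec x ∈ LinearMap.range Z.mulVecLin)
    (Q : ℕ → Matrix (Fin n) (Fin n) ℂ) (hQ : ∀ j, IsUnit (Q j))
    (hQZ : Tendsto Q atTop (𝓝 Z)) :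
    Tendsto (fun j => frob ((Q j)⁻¹ * A * Q j)) atTop atTop :=
  frob_conj_tendsto_atTop_general A Z hAZ Q hQ hQZ
end

section
/- Let 𝔽 be ℝ or ℂ, let n ≥ 2 and K ≥ 2, and let 𝒫 be a probability measure on the K-fold product of the space of n×n matrices over 𝔽 that is absolutely continuous with respect to the product Lebesgue measure. Then the set of tuples 𝒜 = (A_1,…,A_K) that possess a common nontrivial invariant subspace has 𝒫-measure zero. -/
open Matrix MeasureTheory
open scoped Kronecker

/-!
If `A` and `B` leave a subspace `Y` invariant, so does every matrix in the span of the `n²` words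
`A ^ i * B ^ j` (`i, j < n`). A nontrivial `Y` is not invariant under all matrices, so for such a
pair the words do not span, i.e. the `n² × n²` matrix `wordMatrix A B` of their entries is singular.
Its determinant is a polynomial in the entries of the tuple, and this polynomial is nonzero: at
`A = diag(0, 1, …, n - 1)` and `B` the cyclic shift, `wordMatrix A B` is, up to a permutation of
columns, a Vandermonde matrix tensored with the identity. The zero set of a nonzero polynomial is
null for every additive Haar measure (Fubini and induction on the number of variables), and `P` is
absolutely continuous with respect to one.
-/

namespace MvPolynomial

section Measurable

variable {R ι : Type*} [CommRing R] [MeasurableSpace R] [MeasurableAdd₂ R] [MeasurableMul₂ R]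

theorem measurable_eval (p : MvPolynomial ι R) : Measurable fun x : ι → R => eval x p := by
  induction p using MvPolynomial.induction_on with
  | C a => simp
  | add p q hp hq => simp only [map_add]; exact hp.add hq
  | mul_X p i hp => simp only [map_mul, eval_X]; exact hp.mul (measurable_pi_apply i)

theorem measurableSet_setOf_eval_eq_zero [MeasurableSingletonClass R] (p : MvPolynomial ι R) :
    MeasurableSet {x : ι → R | eval x p = 0} :=
  measurable_eval p (measurableSet_singleton 0)

end Measurable

section NullZeroSet

variable {R : Type*} [CommRing R] [IsDomain R] [MeasurableSpace R] [MeasurableSingletonClass R]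
  [MeasurableAdd₂ R] [MeasurableMul₂ R] (ν : Measure R) [SigmaFinite ν] [NullSingletonClass ν]

theorem measure_pi_fin_setOf_eval_eq_zero {d : ℕ} {p : MvPolynomial (Fin d) R} (hp : p ≠ 0) :
    Measure.pi (fun _ : Fin d => ν) {x | eval x p = 0} = 0 := by
  induction d with
  | zero =>
    have hC : p = C (isEmptyAlgEquiv R (Fin 0) p) := by
      rw [← isEmptyAlgEquiv_symm_apply, AlgEquiv.symm_apply_apply]
    suffices ∀ x : Fin 0 → R, eval x p ≠ 0 by simp [this]
    intro x
    rw [hC, eval_C]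
    exact EmbeddingLike.map_ne_zero_iff.2 hp
  | succ d ih =>
    set q := finSuccEquiv R d p
    have hq : q ≠ 0 := EmbeddingLike.map_ne_zero_iff.2 hp
    have hZ := measurableSet_setOf_eval_eq_zero p
    let e := MeasurableEquiv.piFinSuccAbove (fun _ : Fin (d + 1) => R) 0
    rw [← ((measurePreserving_piFinSuccAbove (fun _ => ν) 0).symm e).measure_preimage
      hZ.nullMeasurableSet, Measure.prod_apply_symm (hZ.preimage e.symm.measurable)]
    refine lintegral_eq_zero_of_ae_eq_zero ?_
    -- Off the null zero set of the leading coefficient, each slice is the finite root set of a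
    -- nonzero one-variable polynomial.
    filter_upwards [measure_eq_zero_iff_ae_notMem.1 (ih (Polynomial.leadingCoeff_ne_zero.2 hq))]
      with t ht
    have hqt : q.map (eval t) ≠ 0 := fun h => ht (by simpa using congrArg (·.coeff q.natDegree) h)
    have hslice : (fun y => (y, t)) ⁻¹' (e.symm ⁻¹' {x | eval x p = 0}) =
        {y | (q.map (eval t)).IsRoot y} := by
      ext y
      simp only [e, q, Set.mem_preimage, Set.mem_ofPred_eq, Polynomial.IsRoot.def]
      rw [← eval_eq_eval_mv_eval']
      simp [Fin.consEquiv]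
    rw [hslice]
    exact (Polynomial.finite_setOfPred_isRoot hqt).measure_zero ν

theorem measure_pi_setOf_eval_eq_zero {ι : Type*} [Fintype ι] {p : MvPolynomial ι R}
    (hp : p ≠ 0) : Measure.pi (fun _ : ι => ν) {x | eval x p = 0} = 0 := by
  let e := Fintype.equivFin ι
  rw [← (measurePreserving_arrowCongr' (fun _ => ν) (fun _ : ι => ν) e.symm
    (MeasurableEquiv.refl R) fun _ => MeasurePreserving.id ν).measure_preimage
    (measurableSet_setOf_eval_eq_zero p).nullMeasurableSet]
  convert measure_pi_fin_setOf_eval_eq_zero ν ((rename_injective e e.injective).ne hp) using 2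
  ext y
  simp only [MeasurableEquiv.arrowCongr', Equiv.arrowCongr', MeasurableEquiv.coe_mk,
    Set.preimage_ofPred_eq, Set.mem_ofPred_eq, eval_rename]
  rfl

end NullZeroSet

theorem addHaar_preimage_setOf_eval_eq_zero {𝕜 E ι : Type*} [NontriviallyNormedField 𝕜]
    [CompleteSpace 𝕜] [LocallyCompactSpace 𝕜] [SecondCountableTopology 𝕜] [MeasurableSpace 𝕜]
    [BorelSpace 𝕜] [AddCommGroup E] [Module 𝕜 E] [TopologicalSpace E] [IsTopologicalAddGroup E]
    [ContinuousSMul 𝕜 E] [T2Space E] [FiniteDimensional 𝕜 E] [LocallyCompactSpace E]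
    [SecondCountableTopology E] [MeasurableSpace E] [BorelSpace E] [Fintype ι]
    (μ : Measure E) [μ.IsAddHaarMeasure] (c : E ≃ₗ[𝕜] (ι → 𝕜)) {p : MvPolynomial ι 𝕜}
    (hp : p ≠ 0) : μ (c ⁻¹' {x | eval x p = 0}) = 0 := by
  let ν : Measure (ι → 𝕜) := Measure.pi fun _ => Measure.addHaar
  have hc : Continuous c := LinearMap.continuous_of_finiteDimensional c.toLinearMap
  have hc' : Continuous c.symm := LinearMap.continuous_of_finiteDimensional c.symm.toLinearMap
  refine Measure.absolutelyContinuous_isAddHaarMeasure μ (ν.map c.symm) ?_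
  rw [Measure.map_apply hc'.measurable (hc.measurable (measurableSet_setOf_eval_eq_zero p))]
  simpa [ν, Set.preimage_preimage] using measure_pi_setOf_eval_eq_zero Measure.addHaar hp

end MvPolynomial

namespace Matrix

instance instLocallyCompactSpace {m n R : Type*} [TopologicalSpace R] [LocallyCompactSpace R]
    [Finite m] [Finite n] : LocallyCompactSpace (Matrix m n R) :=
  inferInstanceAs (LocallyCompactSpace (m → n → R))

instance instSecondCountableTopology {m n R : Type*} [TopologicalSpace R]
    [SecondCountableTopology R] [Countable m] [Countable n] :
    SecondCountableTopology (Matrix m n R) :=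
  inferInstanceAs (SecondCountableTopology (m → n → R))

variable {R : Type*} [CommRing R] {n : ℕ}

def word (A B : Matrix (Fin n) (Fin n) R) (ij : Fin n × Fin n) : Matrix (Fin n) (Fin n) R :=
  A ^ (ij.1 : ℕ) * B ^ (ij.2 : ℕ)

def wordMatrix (A B : Matrix (Fin n) (Fin n) R) : Matrix (Fin n × Fin n) (Fin n × Fin n) R :=
  of fun ij rs => word A B ij rs.1 rs.2

theorem word_map {S : Type*} [CommRing S] (f : R →+* S) (A B : Matrix (Fin n) (Fin n) R)
    (ij : Fin n × Fin n) : word (A.map f) (B.map f) ij = (word A B ij).map f := by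
  simp only [word, ← RingHom.mapMatrix_apply, map_pow, map_mul]

theorem wordMatrix_map {S : Type*} [CommRing S] (f : R →+* S) (A B : Matrix (Fin n) (Fin n) R) :
    (wordMatrix A B).map f = wordMatrix (A.map f) (B.map f) := by
  ext ij rs
  simp [wordMatrix, word_map]

theorem span_range_word_eq_top {A B : Matrix (Fin n) (Fin n) R}
    (h : IsUnit (wordMatrix A B).det) : Submodule.span R (Set.range (word A B)) = ⊤ := by
  refine eq_top_iff.2 fun M _ => ?_
  obtain ⟨u, hu⟩ := vecMul_surjective_iff_isUnit.2 ((isUnit_iff_isUnit_det _).2 h)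
    fun rs => M rs.1 rs.2
  have hM : M = ∑ ij, u ij • word A B ij := by
    ext r s
    simpa [vecMul, dotProduct, wordMatrix, Matrix.sum_apply] using (congrFun hu (r, s)).symm
  rw [hM]
  exact Submodule.sum_mem _ fun ij _ => Submodule.smul_mem _ _ (Submodule.subset_span ⟨ij, rfl⟩)

section CyclicShift

variable [NeZero n]

def cyclicShift : Matrix (Fin n) (Fin n) R := of fun r s => if s = r + 1 then 1 else 0

open Fin.NatCast in
theorem cyclicShift_pow_apply (j : ℕ) (r s : Fin n) :
    (cyclicShift ^ j : Matrix (Fin n) (Fin n) R) r s = if s = r + j then 1 else 0 := by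
  induction j generalizing s with
  | zero => simp [one_apply, eq_comm]
  | succ j ih =>
    rw [pow_succ, mul_apply, Finset.sum_eq_single (r + j)]
    · rw [ih, if_pos rfl, one_mul]
      simp [cyclicShift, add_assoc]
    · intro t _ ht
      rw [ih, if_neg ht, zero_mul]
    · simp

theorem wordMatrix_diagonal_cyclicShift (c : Fin n → R) :
    wordMatrix (diagonal c) cyclicShift =
      ((vandermonde c)ᵀ ⊗ₖ (1 : Matrix (Fin n) (Fin n) R)).submatrix id
        (Equiv.prodShear (Equiv.refl _) fun r => Equiv.subRight r) := by
  ext ⟨i, j⟩ ⟨r, s⟩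
  simp [wordMatrix, word, diagonal_pow, cyclicShift_pow_apply, vandermonde, one_apply,
    eq_sub_iff_add_eq', eq_comm]

theorem det_wordMatrix_diagonal_cyclicShift_ne_zero [IsDomain R] {c : Fin n → R}
    (hc : Function.Injective c) : (wordMatrix (diagonal c) cyclicShift).det ≠ 0 := by
  rw [wordMatrix_diagonal_cyclicShift, det_permute', det_kronecker, det_transpose, det_one,
    one_pow, mul_one]
  exact mul_ne_zero ((Units.isUnit _).map (Int.castRingHom R)).ne_zero
    (pow_ne_zero _ (det_vandermonde_ne_zero_iff.2 hc))

end CyclicShift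

theorem exists_det_wordMatrix_ne_zero [IsDomain R] [CharZero R] (n : ℕ) :
    ∃ A B : Matrix (Fin n) (Fin n) R, (wordMatrix A B).det ≠ 0 := by
  cases n with
  | zero => exact ⟨0, 0, by simp⟩
  | succ m =>
    exact ⟨_, _, det_wordMatrix_diagonal_cyclicShift_ne_zero
      (c := fun r : Fin (m + 1) => ((r : ℕ) : R)) fun a b h => Fin.ext (Nat.cast_injective h)⟩

end Matrix

namespace Submodule

variable {R m : Type*} [CommRing R] [Fintype m] [DecidableEq m]

def matrixStabilizer (Y : Submodule R (m → R)) : Subalgebra R (Matrix m m R) where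
  carrier := {M | ∀ x ∈ Y, M *ᵥ x ∈ Y}
  mul_mem' {M N} hM hN x hx := by rw [← mulVec_mulVec]; exact hM _ (hN x hx)
  add_mem' {M N} hM hN x hx := by rw [add_mulVec]; exact Y.add_mem (hM x hx) (hN x hx)
  algebraMap_mem' r x hx := by
    rw [Algebra.algebraMap_eq_smul_one, smul_mulVec, one_mulVec]
    exact Y.smul_mem r hx

theorem eq_bot_or_eq_top_of_matrixStabilizer_eq_top {K : Type*} [Field K]
    {Y : Submodule K (m → K)} (h : Y.matrixStabilizer = ⊤) : Y = ⊥ ∨ Y = ⊤ := by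
  refine or_iff_not_imp_left.2 fun hY => eq_top_iff.2 fun z _ => ?_
  obtain ⟨y, hyY, hy⟩ := Y.exists_mem_ne_zero_of_ne_bot hY
  obtain ⟨j, hj⟩ := Function.ne_iff.1 hy
  have hM : vecMulVec z (Pi.single j (y j)⁻¹) ∈ Y.matrixStabilizer := h ▸ Algebra.mem_top
  have hz := hM y hyY
  rwa [vecMulVec_mulVec, single_dotProduct, op_smul_eq_smul, inv_mul_cancel₀ hj, one_smul] at hz

theorem eq_bot_or_eq_top_of_isUnit_det_wordMatrix {K : Type*} [Field K] {n : ℕ}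
    {Y : Submodule K (Fin n → K)} {A B : Matrix (Fin n) (Fin n) K}
    (h : IsUnit (wordMatrix A B).det) (hA : A ∈ Y.matrixStabilizer)
    (hB : B ∈ Y.matrixStabilizer) : Y = ⊥ ∨ Y = ⊤ := by
  refine eq_bot_or_eq_top_of_matrixStabilizer_eq_top (eq_top_iff.2 fun M _ => ?_)
  have hspan : span K (Set.range (word A B)) ≤ Subalgebra.toSubmodule Y.matrixStabilizer :=
    span_le.2 <| Set.range_subset_iff.2 fun ij =>
      Subalgebra.mul_mem _ (Subalgebra.pow_mem _ hA _) (Subalgebra.pow_mem _ hB _)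
  rw [span_range_word_eq_top h] at hspan
  exact hspan mem_top

end Submodule

namespace Matrix

variable (ι m n R : Type*) [CommRing R]

def tupleCoords : (ι → Matrix m n R) ≃ₗ[R] (ι × m × n → R) :=
  LinearEquiv.piCongrRight (fun _ => (ofLinearEquiv R).symm ≪≫ₗ (LinearEquiv.curry R R m n).symm)
    ≪≫ₗ (LinearEquiv.curry R R ι (m × n)).symm

noncomputable def genericTuple : ι → Matrix m n (MvPolynomial (ι × m × n) R) :=
  fun k => of fun i j => MvPolynomial.X (k, i, j)

variable {ι m n R}

theorem genericTuple_map_eval (A : ι → Matrix m n R) (k : ι) :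
    (genericTuple ι m n R k).map (MvPolynomial.eval (tupleCoords ι m n R A)) = A k := by
  ext i j
  simp only [genericTuple, map_apply, of_apply, MvPolynomial.eval_X]
  rfl

theorem eval_det_wordMatrix_genericTuple {n : ℕ} (A : ι → Matrix (Fin n) (Fin n) R) (i₀ i₁ : ι) :
    MvPolynomial.eval (tupleCoords ι _ _ R A)
        (wordMatrix (genericTuple ι _ _ R i₀) (genericTuple ι _ _ R i₁)).det =
      (wordMatrix (A i₀) (A i₁)).det := by
  rw [RingHom.map_det, RingHom.mapMatrix_apply, wordMatrix_map, genericTuple_map_eval,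
    genericTuple_map_eval]

theorem det_wordMatrix_genericTuple_ne_zero [IsDomain R] [CharZero R] {n : ℕ} {i₀ i₁ : ι}
    (h : i₀ ≠ i₁) :
    (wordMatrix (genericTuple ι (Fin n) (Fin n) R i₀) (genericTuple ι _ _ R i₁)).det ≠ 0 := by
  classical
  obtain ⟨A, B, hAB⟩ := exists_det_wordMatrix_ne_zero (R := R) n
  intro h0
  have := eval_det_wordMatrix_genericTuple (Function.update (fun _ => B) i₀ A) i₀ i₁
  simp only [h0, map_zero, Function.update_self, h.symm, Ne, not_false_eq_true,
    Function.update_of_ne] at this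
  exact hAB this.symm

theorem addHaar_setOf_det_wordMatrix_eq_zero {𝕜 : Type*} [NontriviallyNormedField 𝕜]
    [CompleteSpace 𝕜] [LocallyCompactSpace 𝕜] [SecondCountableTopology 𝕜] [MeasurableSpace 𝕜]
    [BorelSpace 𝕜] [CharZero 𝕜] {n : ℕ} [Fintype ι]
    [MeasurableSpace (ι → Matrix (Fin n) (Fin n) 𝕜)] [BorelSpace (ι → Matrix (Fin n) (Fin n) 𝕜)]
    (μ : Measure (ι → Matrix (Fin n) (Fin n) 𝕜)) [μ.IsAddHaarMeasure] {i₀ i₁ : ι}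
    (h : i₀ ≠ i₁) : μ {A | (wordMatrix (A i₀) (A i₁)).det = 0} = 0 := by
  simpa [eval_det_wordMatrix_genericTuple] using
    MvPolynomial.addHaar_preimage_setOf_eval_eq_zero μ (tupleCoords ι _ _ 𝕜)
      (det_wordMatrix_genericTuple_ne_zero h)

end Matrix

theorem prob_common_invariant_subspace_eq_zero_general
    {𝕜 : Type*} [RCLike 𝕜] {n K : ℕ} (hK : 2 ≤ K)
    [MeasurableSpace (Matrix (Fin n) (Fin n) 𝕜)]
    [BorelSpace (Matrix (Fin n) (Fin n) 𝕜)]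
    (μ : Measure (Matrix (Fin n) (Fin n) 𝕜)) [μ.IsAddHaarMeasure] [SigmaFinite μ]
    (P : Measure (Fin K → Matrix (Fin n) (Fin n) 𝕜))
    (hP : P ≪ Measure.pi fun _ : Fin K => μ) :
    P {A : Fin K → Matrix (Fin n) (Fin n) 𝕜 |
        ∃ Y : Submodule 𝕜 (Fin n → 𝕜), Y ≠ ⊥ ∧ Y ≠ ⊤ ∧
          ∀ k, ∀ x ∈ Y, (A k).mulVec x ∈ Y} = 0 := by
  let i₀ : Fin K := ⟨0, by omega⟩
  let i₁ : Fin K := ⟨1, by omega⟩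
  refine hP (measure_mono_null (fun A hA => ?_)
    (addHaar_setOf_det_wordMatrix_eq_zero _ (show i₀ ≠ i₁ from Fin.ne_of_val_ne zero_ne_one)))
  obtain ⟨Y, hbot, htop, hY⟩ := hA
  by_contra hdet
  exact (Submodule.eq_bot_or_eq_top_of_isUnit_det_wordMatrix (isUnit_iff_ne_zero.2 hdet)
    (hY i₀) (hY i₁)).elim hbot htop

/-- if `𝒫` is a probability measure on `K`-tuples of `n × n` matrices
over `𝔽` that is absolutely continuous with respect to the product Lebesgue
(additive Haar) measure, then the set of tuples possessing a common nontrivial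
invariant subspace has `𝒫`-measure zero. -/
theorem prob_common_invariant_subspace_eq_zero
    {𝕜 : Type*} [RCLike 𝕜] {n K : ℕ} (hn : 2 ≤ n) (hK : 2 ≤ K)
    [MeasurableSpace (Matrix (Fin n) (Fin n) 𝕜)]
    [BorelSpace (Matrix (Fin n) (Fin n) 𝕜)]
    (μ : Measure (Matrix (Fin n) (Fin n) 𝕜)) [μ.IsAddHaarMeasure] [SigmaFinite μ]
    (P : Measure (Fin K → Matrix (Fin n) (Fin n) 𝕜)) [IsProbabilityMeasure P]
    (hP : P ≪ Measure.pi fun _ : Fin K => μ) :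
    P {A : Fin K → Matrix (Fin n) (Fin n) 𝕜 |
        ∃ Y : Submodule 𝕜 (Fin n → 𝕜), Y ≠ ⊥ ∧ Y ≠ ⊤ ∧
          ∀ k, ∀ x ∈ Y, (A k).mulVec x ∈ Y} = 0 :=
  prob_common_invariant_subspace_eq_zero_general hK μ P hP
end

section
/- Fix an n×n matrix A over 𝔽 (𝔽 = ℝ or ℂ) and let h_A(Q) = Q^{-1}AQ be defined on the open set of invertible n×n matrices. Then h_A is infinitely differentiable on this set and its j-th differential at an invertible Q, evaluated at the diagonal argument (Z,…,Z), equals d^j h_A|_Q(Z,…,Z) = (−1)^j j! [Q^{-1}Z, (Q^{-1}Z)^{j−1} h_A(Q)] for every j ≥ 1 and every n×n matrix Z, where [X,Y] = XY − YX is the matrix commutator. -/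
open Matrix

attribute [local instance] Matrix.frobeniusNormedAddCommGroup Matrix.frobeniusNormedSpace

namespace ConjAux

attribute [local instance] Matrix.frobeniusNormedRing Matrix.frobeniusNormedAlgebra

variable {𝕜 : Type*} [RCLike 𝕜] {n : ℕ}

local notation "M" => Matrix (Fin n) (Fin n) 𝕜

noncomputable local instance : TopologicalSpace M := PseudoMetricSpace.toUniformSpace.toTopologicalSpace

noncomputable def T (m : ℕ) (Q : M) (W : M →L[ℝ] M) :
    ContinuousMultilinearMap ℝ (fun _ : Fin (m + 1) => M) M :=
  (ContinuousMultilinearMap.mkPiAlgebraFin ℝ (m + 1) M).compContinuousLinearMap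
    (Fin.snoc (fun _ : Fin m => ContinuousLinearMap.mul ℝ M Q⁻¹) W)

noncomputable def conjSeries (A Q : M) : FormalMultilinearSeries ℝ M M
  | 0 => ContinuousMultilinearMap.constOfIsEmpty ℝ (fun _ : Fin 0 => M) (Q⁻¹ * A * Q)
  | (m + 1) => ((-1 : ℝ) ^ (m + 1)) •
      (T m Q (ContinuousLinearMap.mulLeftRight ℝ M Q⁻¹ (Q⁻¹ * A * Q)) -
       T m Q (ContinuousLinearMap.mul ℝ M ((Q⁻¹ * A * Q) * Q⁻¹)))

lemma prod_ofFn_snoc {G : Type*} [Monoid G] (m : ℕ) (B X : G) :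
    (List.ofFn (Fin.snoc (fun _ : Fin m => B) X : Fin (m + 1) → G)).prod = B ^ m * X := by
  rw [List.ofFn_succ']
  simp [List.prod_concat, List.ofFn_const]

lemma T_apply_diag (m : ℕ) (Q : M) (W : M →L[ℝ] M) (Z : M) :
    T m Q W (fun _ => Z) = (Q⁻¹ * Z) ^ m * W Z := by
  have h : (fun i : Fin (m + 1) =>
      (Fin.snoc (fun _ : Fin m => ContinuousLinearMap.mul ℝ M Q⁻¹) W : Fin (m+1) → M →L[ℝ] M) i Z)
      = (Fin.snoc (fun _ : Fin m => Q⁻¹ * Z) (W Z) : Fin (m+1) → M) := by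
    funext i
    refine Fin.lastCases ?_ ?_ i
    · simp
    · intro i; simp [ContinuousLinearMap.mul_apply']
  simp only [T, ContinuousMultilinearMap.compContinuousLinearMap_apply,
    ContinuousMultilinearMap.mkPiAlgebraFin_apply, h, prod_ofFn_snoc]

lemma T_norm_le (m : ℕ) (Q : M) (W : M →L[ℝ] M) :
    ‖T m Q W‖ ≤ ‖Q⁻¹‖ ^ m * ‖W‖ := by
  refine le_trans (ContinuousMultilinearMap.norm_compContinuousLinearMap_le _ _) ?_
  have h1 : ‖ContinuousMultilinearMap.mkPiAlgebraFin ℝ (m + 1) M‖ ≤ 1 :=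
    ContinuousMultilinearMap.norm_mkPiAlgebraFin_succ_le
  have h2 : ∏ i : Fin (m + 1),
      ‖(Fin.snoc (fun _ : Fin m => ContinuousLinearMap.mul ℝ M Q⁻¹) W : Fin (m+1) → M →L[ℝ] M) i‖
      ≤ ‖Q⁻¹‖ ^ m * ‖W‖ := by
    rw [Fin.prod_univ_castSucc]
    simp only [Fin.snoc_castSucc, Fin.snoc_last, Finset.prod_const, Finset.card_univ,
      Fintype.card_fin]
    exact mul_le_mul_of_nonneg_right
      (pow_le_pow_left₀ (norm_nonneg _) (ContinuousLinearMap.opNorm_mul_apply_le ℝ M Q⁻¹) m)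
      (norm_nonneg W)
  calc ‖ContinuousMultilinearMap.mkPiAlgebraFin ℝ (m + 1) M‖ *
        ∏ i : Fin (m + 1), ‖(Fin.snoc (fun _ : Fin m => ContinuousLinearMap.mul ℝ M Q⁻¹) W :
          Fin (m+1) → M →L[ℝ] M) i‖
      ≤ 1 * (‖Q⁻¹‖ ^ m * ‖W‖) := by
        apply mul_le_mul h1 h2 (Finset.prod_nonneg fun _ _ => norm_nonneg _) one_pos.le
    _ = ‖Q⁻¹‖ ^ m * ‖W‖ := one_mul _

lemma neg_one_pow_smul_pow {A : Type*} [Ring A] [Module ℝ A] (k : ℕ) (B : A) :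
    (-B) ^ k = ((-1 : ℝ) ^ k) • B ^ k := by
  rcases Nat.even_or_odd k with h | h
  · rw [h.neg_pow, h.neg_one_pow, one_smul]
  · rw [h.neg_pow, h.neg_one_pow, neg_one_smul]

theorem hasFPowerSeries (A Q : M) (hQ : IsUnit Q) :
    HasFPowerSeriesOnBall (fun Q : M => Q⁻¹ * A * Q) (conjSeries A Q) Q
      (ENNReal.ofReal (1 / (2 * (‖Q⁻¹‖ + 1)))) := by
  haveI : FiniteDimensional ℝ M := Module.Finite.trans 𝕜 M
  set a : ℝ := ‖Q⁻¹‖ with ha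
  set C : M := Q⁻¹ * A * Q with hC
  have ha0 : 0 ≤ a := norm_nonneg _
  have hr0 : (0 : ℝ) < 1 / (2 * (a + 1)) := by positivity
  have har : a * (1 / (2 * (a + 1))) ≤ 1 / 2 := by
    rw [mul_one_div, div_le_div_iff₀ (by positivity) (by norm_num)]
    nlinarith
  constructor
  · -- r ≤ radius
    rw [ENNReal.ofReal]
    apply FormalMultilinearSeries.le_radius_of_bound _ (3 * ‖C‖)
    intro j
    have hcoe : ((1 / (2 * (a + 1)) : ℝ).toNNReal : ℝ) = 1 / (2 * (a + 1)) :=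
      Real.coe_toNNReal _ hr0.le
    rw [hcoe]
    match j with
    | 0 =>
      simp only [conjSeries, pow_zero, mul_one]
      rw [ContinuousMultilinearMap.norm_constOfIsEmpty]
      nlinarith [norm_nonneg C]
    | (m + 1) =>
      have hnorm : ‖conjSeries A Q (m + 1)‖ ≤ 2 * ‖C‖ * a ^ (m + 1) := by
        simp only [conjSeries]
        rw [← hC]
        refine le_trans (norm_smul_le ((-1 : ℝ) ^ (m + 1))
          (T m Q (ContinuousLinearMap.mulLeftRight ℝ M Q⁻¹ C) -
            T m Q (ContinuousLinearMap.mul ℝ M (C * Q⁻¹)))) ?_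
        have h1 : ‖T m Q (ContinuousLinearMap.mulLeftRight ℝ M Q⁻¹ C)‖ ≤ a ^ m * (a * ‖C‖) := by
          refine (T_norm_le m Q _).trans ?_
          gcongr
          exact ContinuousLinearMap.opNorm_mulLeftRight_apply_apply_le ℝ M _ _
        have h2 : ‖T m Q (ContinuousLinearMap.mul ℝ M (C * Q⁻¹))‖ ≤ a ^ m * (‖C‖ * a) := by
          refine (T_norm_le m Q _).trans ?_
          gcongr
          exact (ContinuousLinearMap.opNorm_mul_apply_le ℝ M _).trans (norm_mul_le _ _)
        have h3 : ‖(-1 : ℝ) ^ (m + 1)‖ = 1 := by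
          rw [norm_pow, norm_neg, norm_one, one_pow]
        rw [h3, one_mul]
        calc ‖T m Q (ContinuousLinearMap.mulLeftRight ℝ M Q⁻¹ C) -
              T m Q (ContinuousLinearMap.mul ℝ M (C * Q⁻¹))‖
            ≤ a ^ m * (a * ‖C‖) + a ^ m * (‖C‖ * a) := by
              refine (norm_sub_le _ _).trans (add_le_add h1 h2)
          _ = 2 * ‖C‖ * a ^ (m + 1) := by ring
      calc ‖conjSeries A Q (m + 1)‖ * (1 / (2 * (a + 1))) ^ (m + 1)
          ≤ (2 * ‖C‖ * a ^ (m + 1)) * (1 / (2 * (a + 1))) ^ (m + 1) := by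
            gcongr
          _ = 2 * ‖C‖ * (a * (1 / (2 * (a + 1)))) ^ (m + 1) := by ring
          _ ≤ 2 * ‖C‖ * 1 := by
            have hp : (a * (1 / (2 * (a + 1)))) ^ (m + 1) ≤ 1 :=
              pow_le_one₀ (by positivity) (har.trans (by norm_num))
            have h2c : 0 ≤ 2 * ‖C‖ := by positivity
            nlinarith [pow_nonneg (mul_nonneg ha0 hr0.le) (m+1)]
          _ ≤ 3 * ‖C‖ := by nlinarith [norm_nonneg C]
  · exact ENNReal.ofReal_pos.mpr hr0
  · -- HasSum
    intro y hy
    rw [mem_emetric_ball_zero_iff, ← ofReal_norm,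
      ENNReal.ofReal_lt_ofReal_iff hr0] at hy
    set B : M := Q⁻¹ * y with hB
    have hBnorm : ‖B‖ < 1 := by
      calc ‖B‖ ≤ a * ‖y‖ := norm_mul_le _ _
        _ ≤ a * (1 / (2 * (a + 1))) := mul_le_mul_of_nonneg_left hy.le ha0
        _ ≤ 1 / 2 := har
        _ < 1 := by norm_num
    have hBnorm' : ‖-B‖ < 1 := by rwa [norm_neg]
    have hU : IsUnit (1 + B) := by
      have := isUnit_one_sub_of_norm_lt_one hBnorm'
      rwa [sub_neg_eq_add] at this
    have hQQ : Q * Q⁻¹ = 1 := mul_nonsing_inv Q ((isUnit_iff_isUnit_det Q).mp hQ)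
    have hQy : Q + y = Q * (1 + B) := by
      rw [mul_add, mul_one, hB, ← mul_assoc, hQQ, one_mul]
    have hS : HasSum (fun i : ℕ => (-B) ^ i) (Ring.inverse (1 + B)) := by
      have := hasSum_geom_series_inverse (-B) hBnorm'
      rwa [sub_neg_eq_add] at this
    set S : M := Ring.inverse (1 + B) with hSdef
    have finv : (Q + y)⁻¹ = S * Q⁻¹ := by
      rw [hQy, Matrix.mul_inv_rev, Matrix.nonsing_inv_eq_ringInverse]
    have hval : (Q + y)⁻¹ * A * (Q + y) = S * C + S * (C * B) := by
      rw [finv, hQy, hC]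
      noncomm_ring
    have h1 : HasSum (fun i : ℕ => (-B) ^ i * C) (S * C) := hS.mul_right C
    have h2' : HasSum (fun i : ℕ => (-B) ^ i * (C * B)) (S * (C * B)) := hS.mul_right _
    set g2 : ℕ → M := fun j => Nat.rec 0 (fun m _ => (-B) ^ m * (C * B)) j with hg2
    have h2 : HasSum g2 (S * (C * B)) := by
      have hs : HasSum (fun i : ℕ => g2 (i + 1)) (S * (C * B)) := h2'
      have h0 : g2 0 = 0 := rfl
      have := (hasSum_nat_add_iff (f := g2) 1).mp hs
      simpa [h0] using this
    have hsum := h1.add h2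
    have hfun : (fun j => conjSeries A Q j (fun _ => y)) =
        fun j => (-B) ^ j * C + g2 j := by
      funext j
      match j with
      | 0 =>
        simp [conjSeries, hg2, hC]
      | (m + 1) =>
        simp only [conjSeries, ContinuousMultilinearMap.smul_apply,
          ContinuousMultilinearMap.sub_apply, T_apply_diag,
          ContinuousLinearMap.mulLeftRight_apply, ContinuousLinearMap.mul_apply']
        rw [← hC, ← hB]
        have hfold : C * Q⁻¹ * y = C * B := by rw [hB, mul_assoc]
        have e3 : g2 (m + 1) = (-B) ^ m * (C * B) := rfl
        rw [hfold, e3]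
        rcases Nat.even_or_odd m with h | h
        · rw [h.neg_pow B, (h.add_one).neg_pow B,
            ((h.add_one).neg_one_pow : ((-1 : ℝ)) ^ (m + 1) = -1), neg_one_smul]
          noncomm_ring
        · rw [h.neg_pow B, (h.add_one).neg_pow B,
            ((h.add_one).neg_one_pow : ((-1 : ℝ)) ^ (m + 1) = 1), one_smul]
          noncomm_ring
    rw [hfun]
    convert hsum using 2
    all_goals rfl

theorem main (A : Matrix (Fin n) (Fin n) 𝕜) :
    ContDiffOn ℝ (⊤ : ℕ∞) (fun Q : Matrix (Fin n) (Fin n) 𝕜 => Q⁻¹ * A * Q)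
      {Q : Matrix (Fin n) (Fin n) 𝕜 | IsUnit Q} ∧
    ∀ Q : Matrix (Fin n) (Fin n) 𝕜, IsUnit Q → ∀ j : ℕ, 1 ≤ j →
      ∀ Z : Matrix (Fin n) (Fin n) 𝕜,
        iteratedFDeriv ℝ j (fun Q : Matrix (Fin n) (Fin n) 𝕜 => Q⁻¹ * A * Q) Q
            (fun _ => Z) =
          ((-1 : ℝ) ^ j * (j).factorial) •
            ((Q⁻¹ * Z) * ((Q⁻¹ * Z) ^ (j - 1) * (Q⁻¹ * A * Q)) -
              ((Q⁻¹ * Z) ^ (j - 1) * (Q⁻¹ * A * Q)) * (Q⁻¹ * Z)) := by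
  haveI : FiniteDimensional ℝ M := Module.Finite.trans 𝕜 M
  constructor
  · have h : AnalyticOnNhd ℝ (fun Q : M => Q⁻¹ * A * Q) {Q : M | IsUnit Q} :=
      fun Q hQ => (hasFPowerSeries A Q hQ).analyticAt
    exact h.contDiffOn_of_completeSpace
  · intro Q hQ j hj Z
    obtain ⟨m, rfl⟩ : ∃ m, j = m + 1 := ⟨j - 1, by omega⟩
    have key := (hasFPowerSeries A Q hQ).factorial_smul Z (m + 1)
    rw [← key]
    set B : M := Q⁻¹ * Z with hB
    set C : M := Q⁻¹ * A * Q with hC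
    simp only [conjSeries, ContinuousMultilinearMap.smul_apply,
      ContinuousMultilinearMap.sub_apply, T_apply_diag,
      ContinuousLinearMap.mulLeftRight_apply, ContinuousLinearMap.mul_apply']
    have e1 : (Q⁻¹ * Z) ^ m * (Q⁻¹ * Z * C) = B * (B ^ m * C) := by
      rw [hB, ← mul_assoc, ← pow_succ, pow_succ', mul_assoc]
    have e2 : (Q⁻¹ * Z) ^ m * (C * Q⁻¹ * Z) = B ^ m * C * (Q⁻¹ * Z) := by
      rw [mul_assoc (B ^ m) C, mul_assoc C]
    rw [e1, e2]
    have : ((m + 1).factorial : ℕ) • ((-1 : ℝ) ^ (m + 1) • (B * (B ^ m * C) - B ^ m * C * (Q⁻¹ * Z)))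
        = ((-1 : ℝ) ^ (m + 1) * ((m + 1).factorial : ℕ)) •
          (B * (B ^ m * C) - B ^ m * C * (Q⁻¹ * Z)) := by
      rw [← Nat.cast_smul_eq_nsmul ℝ, smul_smul, mul_comm]
    rw [this]
    simp only [Nat.add_sub_cancel, hB]

end ConjAux

/-- `h_A(Q) = Q⁻¹ A Q` is infinitely (real-Fréchet) differentiable on
the open set of invertible matrices, and for `j ≥ 1` its `j`-th differential at an
invertible `Q`, evaluated on the diagonal `(Z,…,Z)`, is
`(−1)^j j! [Q⁻¹Z, (Q⁻¹Z)^{j−1} h_A(Q)]`. -/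
theorem iteratedFDeriv_conj {𝕜 : Type*} [RCLike 𝕜] {n : ℕ}
    (A : Matrix (Fin n) (Fin n) 𝕜) :
    ContDiffOn ℝ (⊤ : ℕ∞) (fun Q : Matrix (Fin n) (Fin n) 𝕜 => Q⁻¹ * A * Q)
      {Q : Matrix (Fin n) (Fin n) 𝕜 | IsUnit Q} ∧
    ∀ Q : Matrix (Fin n) (Fin n) 𝕜, IsUnit Q → ∀ j : ℕ, 1 ≤ j →
      ∀ Z : Matrix (Fin n) (Fin n) 𝕜,
        iteratedFDeriv ℝ j (fun Q : Matrix (Fin n) (Fin n) 𝕜 => Q⁻¹ * A * Q) Q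
            (fun _ => Z) =
          ((-1 : ℝ) ^ j * (j).factorial) •
            ((Q⁻¹ * Z) * ((Q⁻¹ * Z) ^ (j - 1) * (Q⁻¹ * A * Q)) -
              ((Q⁻¹ * Z) ^ (j - 1) * (Q⁻¹ * A * Q)) * (Q⁻¹ * Z)) :=
  ConjAux.main A
end
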